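/- Upper bound on the layer-wise loss gradient (Lemma C.1): Let c_α > 0 and let the weights α satisfy L ≥ 5 c_α and ‖α‖_{F,∞} ≤ c_α L^{-1/2}. Under activation assumption (i) and with training data satisfying ‖x_i‖₂ = ‖y_i‖₂ = 1 for all i, for every k = 1, …, L one has ‖∇_{α_k} J_L(α)‖_F² ≤ 2 d e^{4.2 c_α} L^{-1} J_L(α). -/

import Mathlib

open Finset

noncomputable section

/-- Euclidean norm of a vector in `ℝ^d`. -/
def vnorm {d : ℕ} (v : Fin d → ℝ) : ℝ := Real.sqrt (∑ i, v i ^ 2)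

/-- Frobenius norm of a `d × d` real matrix. -/
def frobNorm {d : ℕ} (A : Fin d → Fin d → ℝ) : ℝ := Real.sqrt (∑ i, ∑ j, A i j ^ 2)

/-- Matrix-vector product. -/
def mulVec' {d : ℕ} (A : Fin d → Fin d → ℝ) (v : Fin d → ℝ) : Fin d → ℝ :=
  fun i => ∑ j, A i j * v j

/-- Matrix-matrix product. -/
def matMul' {d : ℕ} (A B : Fin d → Fin d → ℝ) : Fin d → Fin d → ℝ :=
  fun i j => ∑ l, A i l * B l j

/-- Hidden states of the residual network: `h_0 = x` and
`h_{k+1} = h_k + L^{-1/2} σ_d(α_{k+1} h_k)`, where the weight of the (1-based)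
layer `k+1` is stored at the (0-based) index `k`. -/
def hiddenState {d L : ℕ} (σ : ℝ → ℝ) (α : Fin L → Fin d → Fin d → ℝ) (x : Fin d → ℝ) :
    ℕ → Fin d → ℝ
  | 0 => x
  | k + 1 =>
      if h : k < L then
        fun i => hiddenState σ α x k i + (Real.sqrt L)⁻¹ * σ (mulVec' (α ⟨k, h⟩) (hiddenState σ α x k) i)
      else hiddenState σ α x k

/-- One factor `I_d + L^{-1/2} diag(σ'(α_{k+1} h_k)) α_{k+1}` of the layer-to-output
Jacobian (0-based index `k`). -/
def layerJac {d L : ℕ} (σ : ℝ → ℝ) (α : Fin L → Fin d → Fin d → ℝ) (x : Fin d → ℝ)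
    (k : ℕ) (h : k < L) : Fin d → Fin d → ℝ :=
  fun i i' => (if i = i' then (1 : ℝ) else 0) +
    (Real.sqrt L)⁻¹ * deriv σ (mulVec' (α ⟨k, h⟩) (hiddenState σ α x k) i) * α ⟨k, h⟩ i i'

/-- Layer-to-output Jacobian `M_k^x(α) = ∂h_L/∂h_k`, where `k` is the 1-based
paper index, `0 ≤ k ≤ L`. -/
def jacM {d L : ℕ} (σ : ℝ → ℝ) (α : Fin L → Fin d → Fin d → ℝ) (x : Fin d → ℝ) :
    ℕ → Fin d → Fin d → ℝ
  | k =>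
      if h : k < L then matMul' (jacM σ α x (k + 1)) (layerJac σ α x k h)
      else fun i i' => if i = i' then 1 else 0
  termination_by k => L - k
  decreasing_by omega

/-- Mean-squared training loss `J_L`. -/
def loss {d L N : ℕ} (σ : ℝ → ℝ) (x y : Fin N → Fin d → ℝ)
    (α : Fin L → Fin d → Fin d → ℝ) : ℝ :=
  (1 / (2 * N)) * ∑ i, ∑ j, (y i j - hiddenState σ α (x i) L j) ^ 2

/-- Partial derivative of the loss with respect to the `(m,n)` entry of the
`k`-th weight matrix. -/
def gradEntry {d L N : ℕ} (σ : ℝ → ℝ) (x y : Fin N → Fin d → ℝ)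
    (α : Fin L → Fin d → Fin d → ℝ) (k : Fin L) (m n : Fin d) : ℝ :=
  fderiv ℝ (loss σ x y) α (Pi.single k (Pi.single m (Pi.single n 1)))

/-- `G_k^{x,y}(α) = (M_k^x(α))ᵀ (ŷ(x,α) − y)`; `k` is the 1-based paper index. -/
def Gvec {d L : ℕ} (σ : ℝ → ℝ) (α : Fin L → Fin d → Fin d → ℝ) (x y : Fin d → ℝ)
    (k : ℕ) : Fin d → ℝ :=
  fun n => ∑ j, jacM σ α x k j n * (hiddenState σ α x L j - y j)

/-- Assumption (i) on the activation function: `σ ∈ C²`, `σ'(0) = 1`, and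
`|σ(z)| ≤ |z|`, `|σ'(z)| ≤ 1`, `|σ''(z)| ≤ 1` for all `z`. -/
def ActAssump (σ : ℝ → ℝ) : Prop :=
  ContDiff ℝ 2 σ ∧ deriv σ 0 = 1 ∧
    ∀ z : ℝ, |σ z| ≤ |z| ∧ |deriv σ z| ≤ 1 ∧ |deriv (deriv σ) z| ≤ 1

/-!
The gradient with respect to `α_k` is the sample average of the rank-one matrices
`L^{-1/2} (G_k ⊙ σ'(α_k h_{k-1})) h_{k-1}ᵀ`, where `G_k = M_kᵀ (ŷ - y)` is the backpropagated
residual: pairing `G_j` with the forward derivative of `h_j` in the direction of one entry of `α_k`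
gives the same value at every layer `j ≥ k`. A residual layer changes Euclidean norms by a factor
at most `1 + c_α / L`, forwards because `|σ(z)| ≤ |z|` and backwards because `|σ'| ≤ 1`, so
`‖h_{k-1}‖ ≤ e^{c_α}` and `‖G_k‖ ≤ e^{c_α} ‖ŷ - y‖`. Jensen's inequality over the samples then
bounds the squared Frobenius norm of the gradient by `2 e^{4 c_α} L⁻¹ J_L(α)`.
-/

section EuclideanNorm

variable {d : ℕ}

lemma vnorm_nonneg (v : Fin d → ℝ) : 0 ≤ vnorm v := Real.sqrt_nonneg _

lemma vnorm_sq (v : Fin d → ℝ) : vnorm v ^ 2 = ∑ i, v i ^ 2 :=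
  Real.sq_sqrt (sum_nonneg fun _ _ => sq_nonneg _)

lemma vnorm_eq_norm (v : Fin d → ℝ) :
    vnorm v = ‖(WithLp.toLp 2 v : EuclideanSpace ℝ (Fin d))‖ := by
  simp [vnorm, EuclideanSpace.norm_eq]

lemma vnorm_add_le (u v : Fin d → ℝ) : vnorm (u + v) ≤ vnorm u + vnorm v := by
  simpa only [vnorm_eq_norm, WithLp.toLp_add] using norm_add_le _ _

lemma vnorm_const_mul (c : ℝ) (v : Fin d → ℝ) : vnorm (fun i => c * v i) = |c| * vnorm v := by
  rw [vnorm, vnorm, ← Real.sqrt_sq_eq_abs, ← Real.sqrt_mul (sq_nonneg _), mul_sum]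
  simp only [mul_pow]

lemma vnorm_le_of_abs_le {u v : Fin d → ℝ} (h : ∀ i, |u i| ≤ |v i|) : vnorm u ≤ vnorm v :=
  Real.sqrt_le_sqrt (sum_le_sum fun i _ => sq_le_sq.mpr (h i))

lemma vnorm_mulVec'_le (A : Fin d → Fin d → ℝ) (v : Fin d → ℝ) :
    vnorm (mulVec' A v) ≤ frobNorm A * vnorm v := by
  rw [vnorm, vnorm, frobNorm, ← Real.sqrt_mul (sum_nonneg fun _ _ => sum_nonneg fun _ _ =>
    sq_nonneg _), sum_mul]
  exact Real.sqrt_le_sqrt (sum_le_sum fun i _ => sum_mul_sq_le_sq_mul_sq univ (A i) v)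

lemma frobNorm_transpose (A : Fin d → Fin d → ℝ) : frobNorm (fun i j => A j i) = frobNorm A := by
  rw [frobNorm, frobNorm, sum_comm]

lemma sum_sum_sq_mul (a b : Fin d → ℝ) :
    ∑ m, ∑ n, (a m * b n) ^ 2 = vnorm a ^ 2 * vnorm b ^ 2 := by
  simp only [vnorm_sq, sum_mul_sum, mul_pow]

end EuclideanNorm

lemma vnorm_add_inv_sqrt_mul_le {d L : ℕ} {c : ℝ} {u w : Fin d → ℝ}
    (hw : vnorm w ≤ c * (√(L : ℝ))⁻¹ * vnorm u) :
    vnorm (u + fun i => (√(L : ℝ))⁻¹ * w i) ≤ (1 + c / L) * vnorm u := by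
  have hL : (√(L : ℝ))⁻¹ * (√(L : ℝ))⁻¹ = (L : ℝ)⁻¹ := by
    rw [← mul_inv, Real.mul_self_sqrt (Nat.cast_nonneg _)]
  calc vnorm (u + fun i => (√(L : ℝ))⁻¹ * w i)
      ≤ vnorm u + (√(L : ℝ))⁻¹ * vnorm w := by
        grw [vnorm_add_le, vnorm_const_mul, abs_of_nonneg (by positivity)]
    _ ≤ vnorm u + (√(L : ℝ))⁻¹ * (c * (√(L : ℝ))⁻¹ * vnorm u) := by gcongr
    _ = (1 + c / L) * vnorm u := by linear_combination (c * vnorm u) * hL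

lemma one_add_div_pow_le_exp {L j : ℕ} {c : ℝ} (hc : 0 ≤ c) (hj : j ≤ L) :
    (1 + c / L) ^ j ≤ Real.exp c := by
  calc (1 + c / L) ^ j ≤ (1 + c / L) ^ L :=
        pow_le_pow_right₀ (le_add_of_nonneg_right (by positivity)) hj
    _ ≤ Real.exp c := by
        have hL : -c ≤ L := by linarith [(L.cast_nonneg : (0 : ℝ) ≤ L)]
        simpa [neg_div, sub_neg_eq_add] using Real.one_sub_div_pow_le_exp_neg hL

section Propagation

variable {d L : ℕ} {σ : ℝ → ℝ} (α : Fin L → Fin d → Fin d → ℝ)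

lemma hiddenState_succ (x : Fin d → ℝ) {j : ℕ} (hj : j < L) :
    hiddenState σ α x (j + 1) = hiddenState σ α x j +
      fun i => (√(L : ℝ))⁻¹ * σ (mulVec' (α ⟨j, hj⟩) (hiddenState σ α x j) i) := by
  funext i
  simp [hiddenState, hj]

lemma Gvec_eq_sum_layerJac (x y : Fin d → ℝ) {j : ℕ} (hj : j < L) (n : Fin d) :
    Gvec σ α x y j n = ∑ l, layerJac σ α x j hj l n * Gvec σ α x y (j + 1) l := by
  rw [Gvec, jacM, dif_pos hj]
  simp only [matMul', Gvec, sum_mul, mul_sum]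
  rw [sum_comm]
  exact sum_congr rfl fun _ _ => sum_congr rfl fun _ _ => by ring

lemma Gvec_self (x y : Fin d → ℝ) : Gvec σ α x y L = hiddenState σ α x L - y := by
  funext n
  rw [Gvec, jacM]
  simp [ite_mul]

lemma Gvec_eq_add (x y : Fin d → ℝ) {j : ℕ} (hj : j < L) :
    Gvec σ α x y j = Gvec σ α x y (j + 1) + fun n => (√(L : ℝ))⁻¹ *
      mulVec' (fun n l => α ⟨j, hj⟩ l n)
        (fun l => deriv σ (mulVec' (α ⟨j, hj⟩) (hiddenState σ α x j) l) *
          Gvec σ α x y (j + 1) l) n := by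
  funext n
  simp only [Gvec_eq_sum_layerJac α x y hj n, layerJac, Pi.add_apply, mulVec', mul_sum, add_mul,
    sum_add_distrib, ite_mul, one_mul, zero_mul, sum_ite_eq', mem_univ, if_true]
  exact congrArg _ (sum_congr rfl fun l _ => by ring)

variable {c : ℝ}

lemma vnorm_hiddenState_le (hσ : ∀ z, |σ z| ≤ |z|) (hc : 0 ≤ c)
    (hα : ∀ k, frobNorm (α k) ≤ c * (√(L : ℝ))⁻¹) (x : Fin d → ℝ) :
    ∀ j ≤ L, vnorm (hiddenState σ α x j) ≤ (1 + c / L) ^ j * vnorm x := by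
  intro j
  induction j with
  | zero => simp [hiddenState]
  | succ j ih =>
    intro hj
    rw [hiddenState_succ α x hj]
    have hstep : vnorm (fun i => σ (mulVec' (α ⟨j, hj⟩) (hiddenState σ α x j) i)) ≤
        c * (√(L : ℝ))⁻¹ * vnorm (hiddenState σ α x j) :=
      calc _ ≤ vnorm (mulVec' (α ⟨j, hj⟩) (hiddenState σ α x j)) :=
            vnorm_le_of_abs_le fun i => hσ _
        _ ≤ _ := by grw [vnorm_mulVec'_le, hα]; exact vnorm_nonneg _
    grw [vnorm_add_inv_sqrt_mul_le hstep, ih (by omega), pow_succ]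
    rw [mul_comm _ (1 + c / L), mul_assoc]

lemma vnorm_Gvec_le (hσ' : ∀ z, |deriv σ z| ≤ 1) (hc : 0 ≤ c)
    (hα : ∀ k, frobNorm (α k) ≤ c * (√(L : ℝ))⁻¹) (x y : Fin d → ℝ) :
    ∀ i ≤ L, vnorm (Gvec σ α x y (L - i)) ≤ (1 + c / L) ^ i * vnorm (hiddenState σ α x L - y) := by
  intro i
  induction i with
  | zero => simp [Gvec_self]
  | succ i ih =>
    intro hi
    have hj : L - (i + 1) < L := by omega
    have hsucc : L - (i + 1) + 1 = L - i := by omega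
    rw [Gvec_eq_add α x y hj, hsucc]
    have hstep : vnorm (mulVec' (fun n l => α ⟨L - (i + 1), hj⟩ l n)
        (fun l => deriv σ (mulVec' (α ⟨L - (i + 1), hj⟩) (hiddenState σ α x (L - (i + 1))) l) *
          Gvec σ α x y (L - i) l)) ≤ c * (√(L : ℝ))⁻¹ * vnorm (Gvec σ α x y (L - i)) := by
      have hdamp : vnorm (fun l => deriv σ (mulVec' (α ⟨L - (i + 1), hj⟩)
          (hiddenState σ α x (L - (i + 1))) l) * Gvec σ α x y (L - i) l) ≤
          vnorm (Gvec σ α x y (L - i)) := vnorm_le_of_abs_le fun l => by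
        rw [abs_mul]; exact mul_le_of_le_one_left (abs_nonneg _) (hσ' _)
      grw [vnorm_mulVec'_le, frobNorm_transpose, hα, hdamp]
      exact vnorm_nonneg _
    grw [vnorm_add_inv_sqrt_mul_le hstep, ih (by omega), pow_succ]
    rw [mul_comm _ (1 + c / L), mul_assoc]

end Propagation

section Derivative

variable {d L : ℕ} {σ : ℝ → ℝ}

lemma differentiable_hiddenState (hσ : Differentiable ℝ σ) (x : Fin d → ℝ) (j : ℕ) (i : Fin d) :
    Differentiable ℝ (fun α : Fin L → Fin d → Fin d → ℝ => hiddenState σ α x j i) := by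
  induction j generalizing i with
  | zero => simp [hiddenState]
  | succ j ih =>
    by_cases hj : j < L
    · simp only [hiddenState, dif_pos hj, mulVec']
      exact (ih i).add ((hσ.comp (Differentiable.fun_sum fun l _ =>
        (by fun_prop : Differentiable ℝ fun α : Fin L → Fin d → Fin d → ℝ => α ⟨j, hj⟩ i l).mul
          (ih l))).const_mul _)
    · simpa [hiddenState, dif_neg hj] using ih i

lemma differentiable_loss {N : ℕ} (hσ : Differentiable ℝ σ) (x y : Fin N → Fin d → ℝ) :
    Differentiable ℝ (loss σ x y (L := L)) :=
  (Differentiable.fun_sum fun s _ => Differentiable.fun_sum fun j _ =>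
    ((differentiable_const _).sub (differentiable_hiddenState hσ (x s) L j)).pow 2).const_mul _

def hiddenTangent (σ : ℝ → ℝ) (α e : Fin L → Fin d → Fin d → ℝ) (x : Fin d → ℝ) :
    ℕ → Fin d → ℝ
  | 0 => 0
  | j + 1 =>
      if hj : j < L then
        fun i => hiddenTangent σ α e x j i + (√(L : ℝ))⁻¹ *
          (deriv σ (mulVec' (α ⟨j, hj⟩) (hiddenState σ α x j) i) *
            (mulVec' (α ⟨j, hj⟩) (hiddenTangent σ α e x j) i +
              mulVec' (e ⟨j, hj⟩) (hiddenState σ α x j) i))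
      else hiddenTangent σ α e x j

lemma hasDerivAt_hiddenState (hσ : Differentiable ℝ σ) (α e : Fin L → Fin d → Fin d → ℝ)
    (x : Fin d → ℝ) (j : ℕ) (i : Fin d) :
    HasDerivAt (fun t : ℝ => hiddenState σ (α + t • e) x j i) (hiddenTangent σ α e x j i) 0 := by
  have hα : α + (0 : ℝ) • e = α := by simp
  induction j generalizing i with
  | zero => simpa [hiddenState, hiddenTangent] using hasDerivAt_const (0 : ℝ) (x i)
  | succ j ih =>
    by_cases hj : j < L
    · have hpre : HasDerivAt
          (fun t : ℝ => mulVec' ((α + t • e) ⟨j, hj⟩) (hiddenState σ (α + t • e) x j) i)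
          (mulVec' (α ⟨j, hj⟩) (hiddenTangent σ α e x j) i +
            mulVec' (e ⟨j, hj⟩) (hiddenState σ α x j) i) 0 := by
        have hterm (l : Fin d) : HasDerivAt
            (fun t : ℝ => (α + t • e) ⟨j, hj⟩ i l * hiddenState σ (α + t • e) x j l)
            (e ⟨j, hj⟩ i l * hiddenState σ α x j l + α ⟨j, hj⟩ i l * hiddenTangent σ α e x j l)
            0 := by
          have hweight : HasDerivAt (fun t : ℝ => (α + t • e) ⟨j, hj⟩ i l) (e ⟨j, hj⟩ i l) 0 := by
            simpa using ((hasDerivAt_id (0 : ℝ)).mul_const (e ⟨j, hj⟩ i l)).const_add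
              (α ⟨j, hj⟩ i l)
          simpa [hα] using hweight.fun_mul (ih l)
        refine (HasDerivAt.fun_sum fun l (_ : l ∈ univ) => hterm l).congr_deriv ?_
        simp only [mulVec', sum_add_distrib, add_comm]
      have hact := (hσ _).hasDerivAt.comp (0 : ℝ) hpre
      simp only [hα, Function.comp_def] at hact
      simpa only [hiddenState, hiddenTangent, dif_pos hj] using
        (ih i).fun_add (hact.const_mul (√(L : ℝ))⁻¹)
    · simpa only [hiddenState, hiddenTangent, dif_neg hj] using ih i

lemma hasDerivAt_loss {N : ℕ} (hσ : Differentiable ℝ σ) (x y : Fin N → Fin d → ℝ)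
    (α e : Fin L → Fin d → Fin d → ℝ) :
    HasDerivAt (fun t : ℝ => loss σ x y (α + t • e))
      ((∑ s, dotProduct (hiddenState σ α (x s) L - y s) (hiddenTangent σ α e (x s) L)) / N)
      0 := by
  have hα : α + (0 : ℝ) • e = α := by simp
  have hterm (s : Fin N) (j : Fin d) : HasDerivAt
      (fun t : ℝ => (y s j - hiddenState σ (α + t • e) (x s) L j) ^ 2)
      (2 * (y s j - hiddenState σ α (x s) L j) ^ 1 * (0 - hiddenTangent σ α e (x s) L j)) 0 := by
    simpa [hα] using ((hasDerivAt_const (0 : ℝ) (y s j)).fun_sub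
      (hasDerivAt_hiddenState hσ α e (x s) L j)).fun_pow 2
  refine ((HasDerivAt.fun_sum fun s (_ : s ∈ univ) => HasDerivAt.fun_sum fun j (_ : j ∈ univ) =>
    hterm s j).const_mul (1 / (2 * (N : ℝ)))).congr_deriv ?_
  simp only [dotProduct, Pi.sub_apply, sum_div, mul_sum]
  exact sum_congr rfl fun s _ => sum_congr rfl fun j _ => by ring

def unitWeight (k : Fin L) (m n : Fin d) : Fin L → Fin d → Fin d → ℝ :=
  Pi.single k (Pi.single m (Pi.single n 1))

lemma gradEntry_eq_sum {N : ℕ} (hσ : Differentiable ℝ σ) (x y : Fin N → Fin d → ℝ)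
    (α : Fin L → Fin d → Fin d → ℝ) (k : Fin L) (m n : Fin d) :
    gradEntry σ x y α k m n = (∑ s, dotProduct (hiddenState σ α (x s) L - y s)
      (hiddenTangent σ α (unitWeight k m n) (x s) L)) / N := by
  rw [gradEntry, ← (differentiable_loss hσ x y α).lineDeriv_eq_fderiv, lineDeriv]
  exact (hasDerivAt_loss hσ x y α _).deriv

end Derivative

section Backpropagation

variable {d L : ℕ} {σ : ℝ → ℝ} (α : Fin L → Fin d → Fin d → ℝ) (x : Fin d → ℝ) (k : Fin L)
  (m n : Fin d)

lemma unitWeight_of_ne {j : ℕ} (hj : j < L) (hne : j ≠ k) : unitWeight k m n ⟨j, hj⟩ = 0 :=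
  Pi.single_eq_of_ne (fun h => hne (congrArg Fin.val h)) _

lemma hiddenTangent_unitWeight_of_le {j : ℕ} (hj : j ≤ k) :
    hiddenTangent σ α (unitWeight k m n) x j = 0 := by
  induction j with
  | zero => rfl
  | succ j ih =>
    have hjL : j < L := by omega
    funext i
    simp [hiddenTangent, hjL, ih (by omega), unitWeight_of_ne k m n hjL (by omega), mulVec']

lemma hiddenTangent_unitWeight_succ :
    hiddenTangent σ α (unitWeight k m n) x (k + 1) = Pi.single m ((√(L : ℝ))⁻¹ *
      (deriv σ (mulVec' (α k) (hiddenState σ α x k) m) * hiddenState σ α x k n)) := by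
  funext i
  simp only [hiddenTangent, dif_pos k.isLt, hiddenTangent_unitWeight_of_le α x k m n le_rfl]
  by_cases him : i = m
  · subst him
    simp [unitWeight, mulVec', Pi.single_apply]
  · simp [unitWeight, mulVec', him]

lemma hiddenTangent_unitWeight_succ_of_ne {j : ℕ} (hj : j < L) (hne : j ≠ k) (i : Fin d) :
    hiddenTangent σ α (unitWeight k m n) x (j + 1) i =
      ∑ l, layerJac σ α x j hj i l * hiddenTangent σ α (unitWeight k m n) x j l := by
  simp only [hiddenTangent, dif_pos hj, unitWeight_of_ne k m n hj hne, layerJac, mulVec',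
    add_mul, ite_mul, one_mul, zero_mul, sum_add_distrib, sum_ite_eq, mem_univ, if_true]
  simp [mul_sum, mul_assoc, mul_left_comm]

lemma dotProduct_Gvec_hiddenTangent_succ (y : Fin d → ℝ) {j : ℕ} (hj : j < L) (hne : j ≠ k) :
    dotProduct (Gvec σ α x y (j + 1)) (hiddenTangent σ α (unitWeight k m n) x (j + 1)) =
      dotProduct (Gvec σ α x y j) (hiddenTangent σ α (unitWeight k m n) x j) := by
  simp only [dotProduct, hiddenTangent_unitWeight_succ_of_ne α x k m n hj hne,
    Gvec_eq_sum_layerJac α x y hj, mul_sum, sum_mul]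
  rw [sum_comm]
  exact sum_congr rfl fun _ _ => sum_congr rfl fun _ _ => by ring

lemma residual_dotProduct_hiddenTangent (y : Fin d → ℝ) :
    dotProduct (hiddenState σ α x L - y) (hiddenTangent σ α (unitWeight k m n) x L) =
      (√(L : ℝ))⁻¹ * (Gvec σ α x y (k + 1) m * deriv σ (mulVec' (α k) (hiddenState σ α x k) m)) *
        hiddenState σ α x k n := by
  have hinv : ∀ j, (k : ℕ) + 1 ≤ j → j ≤ L →
      dotProduct (Gvec σ α x y j) (hiddenTangent σ α (unitWeight k m n) x j) =
        dotProduct (Gvec σ α x y (k + 1)) (hiddenTangent σ α (unitWeight k m n) x (k + 1)) := by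
    refine Nat.le_induction (fun _ => rfl) fun j hkj ih hj => ?_
    rw [dotProduct_Gvec_hiddenTangent_succ α x k m n y (by omega) (by omega), ih (by omega)]
  rw [← Gvec_self, hinv L k.isLt le_rfl, hiddenTangent_unitWeight_succ, dotProduct_single]
  ring

end Backpropagation

lemma sum_sum_sq_average_le {N : ℕ} {ι κ : Type*} [Fintype ι] [Fintype κ]
    (F : Fin N → ι → κ → ℝ) :
    ∑ m, ∑ n, ((∑ s, F s m n) / N) ^ 2 ≤ (∑ s, ∑ m, ∑ n, F s m n ^ 2) / N := by
  calc ∑ m, ∑ n, ((∑ s, F s m n) / N) ^ 2 ≤ ∑ m, ∑ n, (∑ s, F s m n ^ 2) / N := by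
        gcongr with m _ n
        simpa using sum_div_card_sq_le_sum_sq_div_card (s := univ) (f := fun s => F s m n)
    _ = (∑ s, ∑ m, ∑ n, F s m n ^ 2) / N := by
        simp only [← sum_div]
        symm
        rw [sum_comm]
        exact congrArg (· / _) (sum_congr rfl fun _ _ => sum_comm)

section GradientBound

variable {d L N : ℕ} {σ : ℝ → ℝ}

def backpropSignal (σ : ℝ → ℝ) (α : Fin L → Fin d → Fin d → ℝ) (x y : Fin d → ℝ) (k : Fin L) :
    Fin d → ℝ :=
  fun m => Gvec σ α x y (k + 1) m * deriv σ (mulVec' (α k) (hiddenState σ α x k) m)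

lemma gradEntry_eq_average (hσ : Differentiable ℝ σ) (x y : Fin N → Fin d → ℝ)
    (α : Fin L → Fin d → Fin d → ℝ) (k : Fin L) (m n : Fin d) :
    gradEntry σ x y α k m n = (∑ s, (√(L : ℝ))⁻¹ * backpropSignal σ α (x s) (y s) k m *
      hiddenState σ α (x s) k n) / N := by
  simp only [gradEntry_eq_sum hσ, residual_dotProduct_hiddenTangent, backpropSignal]

lemma loss_eq (x y : Fin N → Fin d → ℝ) (α : Fin L → Fin d → Fin d → ℝ) :
    loss σ x y α = (∑ s, vnorm (hiddenState σ α (x s) L - y s) ^ 2) / (2 * N) := by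
  simp only [loss, vnorm_sq, Pi.sub_apply, one_div_mul_eq_div]
  exact congrArg (· / _) (sum_congr rfl fun s _ => sum_congr rfl fun j _ => by ring)

lemma sum_sq_gradSample_le (α : Fin L → Fin d → Fin d → ℝ) (hσ : ∀ z, |σ z| ≤ |z|)
    (hσ' : ∀ z, |deriv σ z| ≤ 1) {c : ℝ} (hc : 0 ≤ c)
    (hα : ∀ k, frobNorm (α k) ≤ c * (√(L : ℝ))⁻¹) (x y : Fin d → ℝ) (hx : vnorm x = 1)
    (k : Fin L) :
    ∑ m, ∑ n, ((√(L : ℝ))⁻¹ * backpropSignal σ α x y k m * hiddenState σ α x k n) ^ 2 ≤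
      (L : ℝ)⁻¹ * Real.exp (4 * c) * vnorm (hiddenState σ α x L - y) ^ 2 := by
  have hsignal : vnorm (backpropSignal σ α x y k) ≤
      Real.exp c * vnorm (hiddenState σ α x L - y) :=
    calc vnorm (backpropSignal σ α x y k) ≤ vnorm (Gvec σ α x y (L - (L - (k + 1)))) :=
          vnorm_le_of_abs_le fun m => by
            rw [Nat.sub_sub_self k.isLt, backpropSignal, abs_mul]
            exact mul_le_of_le_one_right (abs_nonneg _) (hσ' _)
      _ ≤ (1 + c / L) ^ (L - (k + 1)) * vnorm (hiddenState σ α x L - y) :=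
          vnorm_Gvec_le α hσ' hc hα x y _ (Nat.sub_le _ _)
      _ ≤ Real.exp c * vnorm (hiddenState σ α x L - y) := by
          grw [one_add_div_pow_le_exp hc (Nat.sub_le L (k + 1))]
          exact vnorm_nonneg _
  have hhidden : vnorm (hiddenState σ α x k) ≤ Real.exp c :=
    calc vnorm (hiddenState σ α x k) ≤ (1 + c / L) ^ (k : ℕ) * vnorm x :=
          vnorm_hiddenState_le α hσ hc hα x k k.isLt.le
      _ ≤ Real.exp c := by rw [hx, mul_one]; exact one_add_div_pow_le_exp hc k.isLt.le
  have hinv : (√(L : ℝ))⁻¹ ^ 2 = (L : ℝ)⁻¹ := by rw [inv_pow, Real.sq_sqrt (Nat.cast_nonneg _)]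
  calc ∑ m, ∑ n, ((√(L : ℝ))⁻¹ * backpropSignal σ α x y k m * hiddenState σ α x k n) ^ 2
      = (L : ℝ)⁻¹ * (vnorm (backpropSignal σ α x y k) ^ 2 * vnorm (hiddenState σ α x k) ^ 2) := by
        simp only [mul_assoc, mul_pow _ (_ * _), ← mul_sum, hinv, sum_sum_sq_mul]
    _ ≤ (L : ℝ)⁻¹ * ((Real.exp c * vnorm (hiddenState σ α x L - y)) ^ 2 * Real.exp c ^ 2) := by
        gcongr <;> exact vnorm_nonneg _
    _ = (L : ℝ)⁻¹ * Real.exp (4 * c) * vnorm (hiddenState σ α x L - y) ^ 2 := by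
        rw [show 4 * c = c + c + c + c by ring, Real.exp_add, Real.exp_add, Real.exp_add]
        ring

end GradientBound

theorem statement3_general {d L N : ℕ} (hd : 1 ≤ d)
    {σ : ℝ → ℝ} (hσ : ActAssump σ)
    (cα : ℝ) (hcα : 0 < cα)
    (x y : Fin N → Fin d → ℝ)
    (hx : ∀ i, vnorm (x i) = 1)
    (α : Fin L → Fin d → Fin d → ℝ)
    (hα : ∀ k, frobNorm (α k) ≤ cα * (Real.sqrt L)⁻¹) (k : Fin L) :
    ∑ m, ∑ n, gradEntry σ x y α k m n ^ 2
      ≤ 2 * d * Real.exp (4.2 * cα) * (L : ℝ)⁻¹ * loss σ x y α := by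
  obtain ⟨hσC2, -, hσbound⟩ := hσ
  have hsample (s : Fin N) := sum_sq_gradSample_le α (fun z => (hσbound z).1)
    (fun z => (hσbound z).2.1) hcα.le hα (x s) (y s) (hx s) k
  have hexp : Real.exp (4 * cα) ≤ d * Real.exp (4.2 * cα) :=
    calc Real.exp (4 * cα) ≤ Real.exp (4.2 * cα) := Real.exp_le_exp.mpr (by linarith)
      _ ≤ d * Real.exp (4.2 * cα) :=
          le_mul_of_one_le_left (Real.exp_nonneg _) (by exact_mod_cast hd)
  have hloss : 0 ≤ loss σ x y α := by rw [loss_eq]; positivity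
  calc ∑ m, ∑ n, gradEntry σ x y α k m n ^ 2
      ≤ (∑ s, ∑ m, ∑ n, ((√(L : ℝ))⁻¹ * backpropSignal σ α (x s) (y s) k m *
          hiddenState σ α (x s) k n) ^ 2) / N := by
        simp only [gradEntry_eq_average (hσC2.differentiable (by norm_num))]
        exact sum_sum_sq_average_le _
    _ ≤ (∑ s, (L : ℝ)⁻¹ * Real.exp (4 * cα) * vnorm (hiddenState σ α (x s) L - y s) ^ 2) / N := by
        gcongr with s; exact hsample s
    _ = 2 * Real.exp (4 * cα) * (L : ℝ)⁻¹ * loss σ x y α := by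
        rw [loss_eq, ← mul_sum]; field_simp
    _ ≤ 2 * d * Real.exp (4.2 * cα) * (L : ℝ)⁻¹ * loss σ x y α := by
        grw [hexp]
        exact le_of_eq (by ring)

/-- **Upper bound on the layer-wise loss gradient (Lemma C.1).** -/
theorem statement3 {d L N : ℕ} (hd : 1 ≤ d) (hL : 1 ≤ L) (hN : 1 ≤ N)
    {σ : ℝ → ℝ} (hσ : ActAssump σ)
    (cα : ℝ) (hcα : 0 < cα) (hLα : 5 * cα ≤ (L : ℝ))
    (x y : Fin N → Fin d → ℝ)
    (hx : ∀ i, vnorm (x i) = 1) (hy : ∀ i, vnorm (y i) = 1)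
    (α : Fin L → Fin d → Fin d → ℝ)
    (hα : ∀ k, frobNorm (α k) ≤ cα * (Real.sqrt L)⁻¹) (k : Fin L) :
    ∑ m, ∑ n, gradEntry σ x y α k m n ^ 2
      ≤ 2 * d * Real.exp (4.2 * cα) * (L : ℝ)⁻¹ * loss σ x y α :=
  statement3_general hd hσ cα hcα x y hx α hα k
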